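/- Let θ be the substitution on {a,b} with θ(a) = ab and θ(b) = aa, let X_θ be its substitution subshift, let A = {x ∈ X_θ : (x_0,…,x_7) = (a,b,a,a,a,b,a,b)}, define p : X_θ → {1,2,3} by p(x) = 3 if x ∈ A, p(x) = 1 if x ∈ σ(A), and p(x) = 2 otherwise, and let S(x) = σ^{p(x)}(x). Then (X_θ, S) is not a Toeplitz flow: it is not topologically conjugate to (Z, σ) for any finite alphabet D and any closure Z of the σ-orbit of a Toeplitz sequence z ∈ D^ℤ. -/

import Mathlib

open Set Topology Classical

noncomputable section

/-- The left shift `σ` on bi-infinite sequences: `(σ x) n = x (n+1)`. -/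
def shiftMap {A : Type} (x : ℤ → A) : ℤ → A := fun n => x (n + 1)

/-- The shift by an integer amount: `shiftZ n x = σ^n x`. -/
def shiftZ {A : Type} (n : ℤ) (x : ℤ → A) : ℤ → A := fun m => x (m + n)

/-- A bi-infinite sequence is Toeplitz if every coordinate is periodically repeated. -/
def IsToeplitz {A : Type} (x : ℤ → A) : Prop :=
  ∀ i : ℤ, ∃ p : ℕ, 0 < p ∧ ∀ k : ℤ, x (i + k * (p : ℤ)) = x i

/-- The closure of the full shift orbit of `x`. -/
def orbitClosure {A : Type} [TopologicalSpace A] (x : ℤ → A) : Set (ℤ → A) :=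
  closure {y | ∃ n : ℤ, shiftZ n x = y}

/-- The finite word `x_i x_{i+1} ⋯ x_{i+n-1}`. -/
def seqWord {A : Type} (x : ℤ → A) (i : ℤ) (n : ℕ) : List A :=
  List.ofFn fun m : Fin n => x (i + (m : ℕ))

/-- Iterates `θ^k` of a substitution, applied to a letter. -/
def substPow {A : Type} (θ : A → List A) : ℕ → A → List A
  | 0, a => [a]
  | k + 1, a => (θ a).flatMap (substPow θ k)

/-- The substitution subshift of `θ`: all sequences whose finite subwords occur in
some `θ^k(a)`. -/
def substShift {A : Type} (θ : A → List A) : Set (ℤ → A) :=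
  {x | ∀ i : ℤ, ∀ n : ℕ, ∃ (k : ℕ) (a : A), (seqWord x i n).IsInfix (substPow θ k a)}

/-- The full orbit of `x` under an (invertible) map `S`, within the set `X`. -/
def orbitIn {α : Type} (S : α → α) (X : Set α) (x : α) : Set α :=
  {y | y ∈ X ∧ ∃ n : ℕ, S^[n] x = y ∨ S^[n] y = x}

/-- Every `S`-orbit within `X` is dense in `X`. -/
def MinimalOn {α : Type} [TopologicalSpace α] (S : α → α) (X : Set α) : Prop :=
  ∀ x ∈ X, X ⊆ closure (orbitIn S X x)

/-- Every `T`-orbit in `X` is the union of exactly `c` distinct `S`-orbits. -/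
def OrbitNumberOn {α : Type} (T S : α → α) (X : Set α) (c : ℕ) : Prop :=
  ∀ x ∈ X, ∃ r : Fin c → α,
    (∀ i, r i ∈ orbitIn T X x) ∧
    (∀ i j, i ≠ j → r j ∉ orbitIn S X (r i)) ∧
    (∀ y ∈ orbitIn T X x, ∃ i, y ∈ orbitIn S X (r i))

/-- `S` restricts to a homeomorphism of the subset `X`. -/
def RestrictsToHomeomorph {α : Type} [TopologicalSpace α] (S : α → α) (X : Set α) : Prop :=
  ∃ e : X ≃ₜ X, ∀ x : X, (e x : α) = S (x : α)

/-- The systems `(X, S)` and `(Y, R)` are topologically conjugate. -/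
def TopConj {α β : Type} [TopologicalSpace α] [TopologicalSpace β]
    (X : Set α) (S : α → α) (Y : Set β) (R : β → β) : Prop :=
  ∃ (hS : Set.MapsTo S X X) (hR : Set.MapsTo R Y Y) (h : X ≃ₜ Y),
    ∀ x : X, h (Set.MapsTo.restrict S X X hS x) = Set.MapsTo.restrict R Y Y hR (h x)

/-- `(Y, R)` is a topological factor of `(X, S)`. -/
def IsFactorOn {α β : Type} [TopologicalSpace α] [TopologicalSpace β]
    (X : Set α) (S : α → α) (Y : Set β) (R : β → β) : Prop :=
  ∃ F : α → β, Set.MapsTo F X Y ∧ ContinuousOn F X ∧ Set.SurjOn F X Y ∧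
    ∀ x ∈ X, F (S x) = R (F x)

/-- `(X, S)` is a Toeplitz flow: it is topologically conjugate to the orbit closure of
some Toeplitz sequence over some finite alphabet, with the shift map. -/
def IsToeplitzFlow {α : Type} [TopologicalSpace α] (X : Set α) (S : α → α) : Prop :=
  ∃ (B : Type) (_ : Fintype B) (z : ℤ → B), IsToeplitz z ∧
    (letI : TopologicalSpace B := ⊥
     TopConj X S (orbitClosure z) shiftMap)

/-- `Per_p(x)`: the set of positions where `x` is periodic with period `p`. -/
def PerSet {A : Type} (x : ℤ → A) (p : ℕ) : Set ℤ :=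
  {k | ∀ n : ℤ, x (k + n * (p : ℤ)) = x k}

/-- `p` is an essential period of `x`. -/
def IsEssentialPeriod {A : Type} (x : ℤ → A) (p : ℕ) : Prop :=
  0 < p ∧ ¬ ∃ q : ℕ, 0 < q ∧ q < p ∧
    ((fun k => k + (q : ℤ)) '' PerSet x p = PerSet x p) ∧
    (∀ k ∈ PerSet x p, x (k + (q : ℤ)) = x k)

/-- A period structure for a Toeplitz sequence `x`. -/
def IsPeriodStructure {A : Type} (x : ℤ → A) (p : ℕ → ℕ) : Prop :=
  StrictMono p ∧ (∀ k, IsEssentialPeriod x (p k)) ∧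
  (∀ k, p k ∣ p (k + 1)) ∧ (⋃ k, PerSet x (p k)) = Set.univ

/-- `x` is a (σ-)periodic sequence. -/
def IsPeriodicSeq {A : Type} (x : ℤ → A) : Prop :=
  ∃ n : ℕ, 0 < n ∧ ∀ m : ℤ, x (m + (n : ℤ)) = x m

/-- `z` is the bi-infinite concatenation of the `ψ`-images of the letters of `y`,
with `ψ(y₀)` beginning at coordinate `0`. -/
def IsConcat {B C : Type} (ψ : B → List C) (y : ℤ → B) (z : ℤ → C) : Prop :=
  ∃ s : ℤ → ℤ, s 0 = 0 ∧
    (∀ n : ℤ, s (n + 1) = s n + ((ψ (y n)).length : ℤ)) ∧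
    (∀ n : ℤ, ∀ j : Fin (ψ (y n)).length, z (s n + (j : ℕ)) = (ψ (y n)).get j)

/-- `p(x,n) = Σ_{i<n} p(Sⁱ x)`. -/
def psum {X : Type} (p : X → ℕ) (S : X → X) (x : X) (n : ℕ) : ℕ :=
  ∑ i ∈ Finset.range n, p (S^[i] x)


/-- The substitution θ(a) = ab, θ(b) = aa on the alphabet {a, b} = Fin 2 (a = 0, b = 1). -/
def theta : Fin 2 → List (Fin 2) := fun i => if i = 0 then [0, 1] else [0, 0]

/-- The cylinder set A = [θ³(a)] = {x ∈ X_θ : x₀…x₇ = abaaabab}. -/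
def Aset : Set (ℤ → Fin 2) :=
  {x | x ∈ substShift theta ∧ seqWord x 0 8 = [0, 1, 0, 0, 0, 1, 0, 1]}

open scoped Classical in
/-- The jump function: p = 3 on A, p = 1 on σ(A), p = 2 elsewhere. -/
noncomputable def jump (x : ℤ → Fin 2) : ℕ :=
  if x ∈ Aset then 3 else if x ∈ shiftMap '' Aset then 1 else 2

/-- The speedup map S(x) = σ^{p(x)}(x). -/
noncomputable def Sspeed (x : ℤ → Fin 2) : ℤ → Fin 2 := shiftMap^[jump x] x

/-!
A Toeplitz sequence is regularly recurrent: each of its neighbourhoods is visited at all times of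
some progression `k p`. Regular recurrence passes to factors, so it suffices to show that no point
`x` of `X_θ` is regularly recurrent for `S`.

Such an `x` is a concatenation of blocks `θ³(c j) ∈ {abaaabab, abaaabaa}` with `c ∈ X_θ`, and `A`
is exactly the set of starts of the blocks with `c j = a`. The `S`-orbit crosses every block in
four steps, entering it at offset `0` or `1`, and the entry offset flips exactly at the `a`-blocks.
A return time of `x` to a small neighbourhood of itself, along the progression of times `k (4 p)`,
is a multiple of `8` at which the block structure repeats; comparing it with the position of the
orbit after `4 k p` block crossings shows that `c` has an even number of `a`'s in each of the
windows `[M + k p, M + (k + 1) p)`.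

No point of `X_θ` has such a progression of windows. For even length desubstitute once: the `a`'s
of `c` are the `b`'s of `θ(c)`. For odd length `Δ` use the blocks `θ^Δ(a)` and `θ^Δ(b)`, which
differ only in their last letter: windows starting one letter before a block boundary, taken along
a progression of odd step, see both last letters and hence both parities.
-/

open Function

@[simp] lemma shiftZ_apply {A : Type} (n : ℤ) (x : ℤ → A) (m : ℤ) :
    shiftZ n x m = x (m + n) := rfl

@[simp] lemma shiftZ_zero {A : Type} (x : ℤ → A) : shiftZ 0 x = x := by
  funext m; simp

lemma shiftZ_shiftZ {A : Type} (a b : ℤ) (x : ℤ → A) :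
    shiftZ a (shiftZ b x) = shiftZ (a + b) x := by
  funext m; simp [add_assoc, add_comm a]

lemma shiftMap_iterate {A : Type} (n : ℕ) (x : ℤ → A) : shiftMap^[n] x = shiftZ n x := by
  induction n with
  | zero => simp
  | succ n ih =>
    rw [iterate_succ_apply', ih]
    funext m
    simp [shiftMap, add_assoc, add_comm (1 : ℤ)]

lemma shiftZ_mem_image_shiftMap_iff {A : Type} {S : Set (ℤ → A)} (t : ℤ) (x : ℤ → A) :
    shiftZ t x ∈ shiftMap '' S ↔ shiftZ (t - 1) x ∈ S := by
  constructor
  · rintro ⟨y, hy, hyx⟩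
    convert hy using 1
    funext m
    have h := congrFun hyx (m - 1)
    simp only [shiftMap, shiftZ_apply, sub_add_cancel] at h
    rw [h, shiftZ_apply]
    ring_nf
  · exact fun h => ⟨_, h, by rw [show shiftMap = shiftZ 1 from rfl, shiftZ_shiftZ, add_sub_cancel]⟩

section SeqWord

variable {A : Type}

lemma seqWord_add (x : ℤ → A) (i : ℤ) (m n : ℕ) :
    seqWord x i (m + n) = seqWord x i m ++ seqWord x (i + m) n := by
  simp [seqWord, List.ofFn_add, add_assoc]

lemma seqWord_one (x : ℤ → A) (i : ℤ) : seqWord x i 1 = [x i] := by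
  simp [seqWord]

lemma seqWord_two (x : ℤ → A) (i : ℤ) : seqWord x i 2 = [x i, x (i + 1)] := by
  simp [seqWord, List.ofFn_succ]

lemma length_seqWord (x : ℤ → A) (i : ℤ) (n : ℕ) : (seqWord x i n).length = n := by
  simp [seqWord]

lemma getElem_seqWord (x : ℤ → A) (i : ℤ) (n m : ℕ) (hm : m < (seqWord x i n).length) :
    (seqWord x i n)[m] = x (i + m) := by
  simp [seqWord]

lemma take_seqWord (x : ℤ → A) (i : ℤ) {m n : ℕ} (h : m ≤ n) :
    (seqWord x i n).take m = seqWord x i m := by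
  obtain ⟨k, rfl⟩ := Nat.exists_eq_add_of_le h
  rw [seqWord_add, List.take_left' (length_seqWord x i m)]

lemma drop_seqWord (x : ℤ → A) (i : ℤ) {m n : ℕ} (h : m ≤ n) :
    (seqWord x i n).drop m = seqWord x (i + m) (n - m) := by
  obtain ⟨k, rfl⟩ := Nat.exists_eq_add_of_le h
  rw [seqWord_add, List.drop_left' (length_seqWord x i m), Nat.add_sub_cancel_left]

lemma seqWord_shiftZ (t : ℤ) (x : ℤ → A) (i : ℤ) (n : ℕ) :
    seqWord (shiftZ t x) i n = seqWord x (i + t) n := by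
  simp only [seqWord, shiftZ_apply]
  congr 1; funext m; ring_nf

lemma seqWord_congr {x y : ℤ → A} {i j : ℤ} {n : ℕ} (h : ∀ m < n, x (i + m) = y (j + m)) :
    seqWord x i n = seqWord y j n := by
  simp only [seqWord]
  congr 1; funext m; exact h m m.2

lemma seqWord_isInfix_of_getD {x : ℤ → A} {v : List A} {i : ℤ} {n q : ℕ} {d : A}
    (hq : q + n ≤ v.length) (h : ∀ m < n, x (i + m) = v.getD (q + m) d) :
    seqWord x i n <:+: v := by
  have : seqWord x i n = (v.drop q).take n := by
    apply List.ext_getElem (by simp [length_seqWord]; omega)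
    intro m hm _
    rw [length_seqWord] at hm
    rw [getElem_seqWord, h m hm, List.getD_eq_getElem _ _ (by omega)]
    simp
  rw [this]
  exact (List.take_prefix _ _).isInfix.trans (List.drop_suffix _ _).isInfix

lemma shiftZ_mem_substShift {θ : A → List A} {x : ℤ → A} (hx : x ∈ substShift θ) (t : ℤ) :
    shiftZ t x ∈ substShift θ :=
  fun i n => seqWord_shiftZ t x i n ▸ hx (i + t) n

lemma exists_getD_substPow {θ : A → List A} {x : ℤ → A} (hx : x ∈ substShift θ) (i : ℤ) (n : ℕ)
    (d : A) : ∃ (k : ℕ) (a : A) (q : ℕ), q + n ≤ (substPow θ k a).length ∧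
      ∀ m < n, x (i + m) = (substPow θ k a).getD (q + m) d := by
  obtain ⟨k, a, s, t, hst⟩ := hx i n
  refine ⟨k, a, s.length, ?_, fun m hm => ?_⟩
  · simp [← hst, length_seqWord]
  · rw [← hst, List.append_assoc, List.getD_append_right _ _ _ _ (by omega),
      Nat.add_sub_cancel_left, List.getD_append _ _ _ _ (by rwa [length_seqWord]),
      List.getD_eq_getElem _ _ (by rwa [length_seqWord]), getElem_seqWord]

lemma substPow_succ' (θ : A → List A) (k : ℕ) (a : A) :
    substPow θ (k + 1) a = (substPow θ k a).flatMap θ := by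
  induction k generalizing a with
  | zero => simp [substPow]
  | succ k ih =>
    show (θ a).flatMap (substPow θ (k + 1)) = ((θ a).flatMap (substPow θ k)).flatMap θ
    simp_rw [List.flatMap_assoc, ← ih]

end SeqWord

/-! ### Regular recurrence -/

def IsRegularlyRecurrent {X : Type*} [TopologicalSpace X] (f : X → X) (x : X) : Prop :=
  ∀ U ∈ 𝓝 x, ∃ p > 0, ∀ k, f^[k * p] x ∈ U

lemma IsRegularlyRecurrent.of_semiconj {X Y : Type*} [TopologicalSpace X] [TopologicalSpace Y]
    {f : X → X} {g : Y → Y} {φ : Y → X} (hφ : Continuous φ) (hs : Semiconj φ g f) {y : Y}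
    (hy : IsRegularlyRecurrent g y) : IsRegularlyRecurrent f (φ y) := by
  intro U hU
  obtain ⟨p, hp, hk⟩ := hy _ (hφ.continuousAt.preimage_mem_nhds hU)
  exact ⟨p, hp, fun k => (hs.iterate_right (k * p)).eq y ▸ hk k⟩

lemma IsRegularlyRecurrent.restrict {X : Type*} [TopologicalSpace X] {f : X → X} {s : Set X}
    (hf : MapsTo f s s) {x : X} (hx : x ∈ s) (h : IsRegularlyRecurrent f x) :
    IsRegularlyRecurrent (hf.restrict f s s) ⟨x, hx⟩ := by
  intro U hU
  obtain ⟨V, hV, hVU⟩ := (mem_nhds_subtype s _ U).1 hU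
  obtain ⟨p, hp, hk⟩ := h V hV
  refine ⟨p, hp, fun k => hVU ?_⟩
  rw [hf.iterate_restrict]
  exact hk k

lemma IsToeplitz.isRegularlyRecurrent {B : Type} [TopologicalSpace B] [DiscreteTopology B]
    {z : ℤ → B} (hz : IsToeplitz z) : IsRegularlyRecurrent shiftMap z := by
  intro U hU
  rw [nhds_pi, Filter.mem_pi] at hU
  obtain ⟨I, hI, t, ht, hIU⟩ := hU
  choose q hq_pos hq using hz
  refine ⟨∏ i ∈ hI.toFinset, q i, Finset.prod_pos fun i _ => hq_pos i, fun k => hIU ?_⟩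
  intro i hi
  obtain ⟨r, hr⟩ := Finset.dvd_prod_of_mem q (hI.mem_toFinset.2 hi)
  rw [shiftMap_iterate, shiftZ_apply, hr]
  have := hq i (k * r)
  push_cast at this ⊢
  rw [show (k : ℤ) * (q i * r) = k * r * q i by ring, this]
  exact mem_of_mem_nhds (ht i)

lemma IsRegularlyRecurrent.exists_iterate_eq_of_abs_le {A : Type} [TopologicalSpace A]
    [DiscreteTopology A] {f : (ℤ → A) → (ℤ → A)} {x : ℤ → A} (h : IsRegularlyRecurrent f x)
    (N : ℤ) : ∃ p > 0, ∀ k, ∀ i, |i| ≤ N → f^[k * p] x i = x i := by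
  obtain ⟨p, hp, hk⟩ := h ((Finset.Icc (-N) N : Set ℤ).pi fun i => {x i})
    (set_pi_mem_nhds (Finset.finite_toSet _) fun i _ => by simp)
  exact ⟨p, hp, fun k i hi => hk k i (by simpa [abs_le] using hi)⟩

/-! ### The words of `θ` -/

lemma theta_eq (c : Fin 2) : theta c = [0, c + 1] := by revert c; decide

lemma substPow_theta_length (k : ℕ) (a : Fin 2) : (substPow theta k a).length = 2 ^ k := by
  induction k generalizing a with
  | zero => rfl
  | succ k ih => simp [substPow, theta_eq, ih, pow_succ, mul_two]

lemma substPow_theta_succ (k : ℕ) (c : Fin 2) :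
    substPow theta (k + 1) c = substPow theta k 0 ++ substPow theta k (c + 1) := by
  simp [substPow, theta_eq]

lemma exists_substPow_theta_eq_append (k : ℕ) :
    ∃ (u : List (Fin 2)) (l : Fin 2), ∀ c, substPow theta k c = u ++ [c + l] := by
  induction k with
  | zero => exact ⟨[], 0, fun c => by simp [substPow]⟩
  | succ k ih =>
    obtain ⟨u, l, hu⟩ := ih
    refine ⟨u ++ [l] ++ u, l + 1, fun c => ?_⟩
    rw [substPow_theta_succ, hu, hu]
    simp [add_assoc, add_comm (1 : Fin 2)]

lemma substPow_theta_three_injective : Injective (substPow theta 3) := by decide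

lemma take_drop_substPow_theta_three_eq_iff : ∀ r < 8, ∀ a b : Fin 2,
    ((substPow theta 3 a ++ substPow theta 3 b).drop r).take 8 = substPow theta 3 0 ↔
      r = 0 ∧ a = 0 := by decide

lemma getD_flatMap_theta_even (v : List (Fin 2)) (m : ℕ) :
    (v.flatMap theta).getD (2 * m) 0 = 0 := by
  induction v generalizing m with
  | nil => simp
  | cons a v ih =>
    cases m with
    | zero => simp [theta_eq]
    | succ m => simpa [theta_eq, mul_add] using ih m

lemma getD_flatMap_theta_odd (v : List (Fin 2)) {m : ℕ} (hm : m < v.length) :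
    (v.flatMap theta).getD (2 * m + 1) 0 = v.getD m 0 + 1 := by
  induction v generalizing m with
  | nil => simp at hm
  | cons a v ih =>
    cases m with
    | zero => simp [theta_eq]
    | succ m => simpa [theta_eq, mul_add] using ih (by simpa using hm)

lemma odd_of_getD_flatMap_theta_eq_one {v : List (Fin 2)} {m : ℕ}
    (h : (v.flatMap theta).getD m 0 = 1) : Odd m := by
  by_contra hm
  obtain ⟨m, rfl⟩ := Nat.not_odd_iff_even.1 hm
  rw [← two_mul, getD_flatMap_theta_even] at h
  exact absurd h (by decide)

lemma exists_getD_flatMap_flatMap_theta_eq_one (w : List (Fin 2)) (q : ℕ)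
    (hq : q + 4 ≤ 4 * w.length) :
    ∃ s < 4, ((w.flatMap theta).flatMap theta).getD (q + s) 0 = 1 := by
  set v := w.flatMap theta
  have hv : v.length = 2 * w.length := by simp [v, theta_eq, mul_comm]
  obtain ⟨m, s, hs, hqs⟩ : ∃ m s, s < 2 ∧ q + s = 2 * m + 1 :=
    ⟨q / 2, 1 - q % 2, by omega, by omega⟩
  rcases Nat.even_or_odd m with ⟨m, rfl⟩ | ⟨m, rfl⟩
  · refine ⟨s, by omega, ?_⟩
    rw [hqs, getD_flatMap_theta_odd _ (by omega), ← two_mul, getD_flatMap_theta_even, zero_add]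
  · refine ⟨s + 2, by omega, ?_⟩
    rw [show q + (s + 2) = 2 * (2 * m + 1 + 1) + 1 by omega, getD_flatMap_theta_odd _ (by omega),
      show 2 * m + 1 + 1 = 2 * (m + 1) by ring, getD_flatMap_theta_even, zero_add]

lemma count_zero_add_count_one (l : List (Fin 2)) : l.count 0 + l.count 1 = l.length := by
  induction l with
  | nil => rfl
  | cons a l ih =>
    rw [List.count_cons, List.count_cons, List.length_cons, ← ih]
    fin_cases a <;> simp <;> omega

/-! ### Points of `X_θ` -/

-- `x = θ(c)`, with the block `θ(c 0) = [0, c 0 + 1]` starting at `δ`.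
def IsThetaImage (x : ℤ → Fin 2) (δ : ℤ) (c : ℤ → Fin 2) : Prop :=
  ∀ j, x (δ + 2 * j) = 0 ∧ x (δ + 2 * j + 1) = c j + 1

section ThetaSubshift

variable {x : ℤ → Fin 2}

lemma even_sub_of_eq_one (hx : x ∈ substShift theta) {i j : ℤ} (hi : x i = 1) (hj : x j = 1) :
    Even (j - i) := by
  wlog hij : i ≤ j generalizing i j
  · simpa using (this hj hi (by omega)).neg
  obtain ⟨d, rfl⟩ : ∃ d : ℕ, j = i + d := ⟨(j - i).toNat, by omega⟩
  obtain ⟨k, a, q, hlen, hw⟩ := exists_getD_substPow hx i (d + 1) 0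
  cases k with
  | zero => simp [substPow] at hlen; simp [show d = 0 by omega]
  | succ k =>
    rw [substPow_succ'] at hw
    have hq := odd_of_getD_flatMap_theta_eq_one ((hw 0 (by omega)).symm.trans (by simpa using hi))
    have hqd := odd_of_getD_flatMap_theta_eq_one ((hw d (by omega)).symm.trans hj)
    rw [Nat.odd_iff] at hq hqd
    exact ⟨d / 2, by omega⟩

lemma exists_lt_four_eq_one (hx : x ∈ substShift theta) (i : ℤ) :
    ∃ s : ℕ, s < 4 ∧ x (i + s) = 1 := by
  obtain ⟨k, a, q, hlen, hw⟩ := exists_getD_substPow hx i 4 0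
  obtain ⟨k, rfl⟩ : ∃ k', k = k' + 2 := ⟨k - 2, by
    by_contra hk
    have : k < 2 := by omega
    interval_cases k <;> simp [substPow_theta_length] at hlen⟩
  rw [substPow_succ', substPow_succ'] at hw
  rw [substPow_theta_length, pow_add] at hlen
  obtain ⟨s, hs, h⟩ := exists_getD_flatMap_flatMap_theta_eq_one (substPow theta k a) q
    (by rw [substPow_theta_length]; omega)
  exact ⟨s, hs, by rw [hw s hs, h]⟩

lemma IsThetaImage.mem_substShift {δ : ℤ} {c : ℤ → Fin 2} (hrel : IsThetaImage x δ c)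
    (hx : x ∈ substShift theta) : c ∈ substShift theta := by
  intro i n
  rcases Nat.lt_or_ge n 2 with hn | hn
  · refine ⟨1, 0, ?_⟩
    interval_cases n
    · simp [seqWord]
    · rw [seqWord_one]; generalize c i = b; revert b; decide
  obtain ⟨k, a, q, hlen, hw⟩ := exists_getD_substPow hx (δ + 2 * i) (2 * n) 0
  rcases k with _ | k
  · simp [substPow] at hlen; omega
  rw [substPow_succ'] at hw
  rw [substPow_theta_length, pow_succ] at hlen
  rcases Nat.even_or_odd q with ⟨q, rfl⟩ | ⟨q, rfl⟩
  · refine ⟨k, a, seqWord_isInfix_of_getD (q := q) (d := 0)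
      (by rw [substPow_theta_length]; omega) fun m hm => ?_⟩
    have := hw (2 * m + 1) (by omega)
    rw [show q + q + (2 * m + 1) = 2 * (q + m) + 1 by ring,
      getD_flatMap_theta_odd _ (by rw [substPow_theta_length]; omega),
      show δ + 2 * i + ((2 * m + 1 : ℕ) : ℤ) = δ + 2 * (i + m) + 1 by push_cast; ring,
      (hrel _).2] at this
    exact add_right_cancel this
  -- an odd offset would put `aaaa` at `δ + 2 i + 1`
  · have hzero : ∀ s : ℕ, s < 4 → x (δ + 2 * i + 1 + s) = 0 := by
      intro s hs
      rcases Nat.even_or_odd s with ⟨s, rfl⟩ | ⟨s, rfl⟩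
      · have := hw (s + s + 1) (by omega)
        rwa [show 2 * q + 1 + (s + s + 1) = 2 * (q + s + 1) by ring, getD_flatMap_theta_even,
          show δ + 2 * i + ((s + s + 1 : ℕ) : ℤ) = δ + 2 * i + 1 + ((s + s : ℕ) : ℤ) by
            push_cast; ring] at this
      · rw [show δ + 2 * i + 1 + ((2 * s + 1 : ℕ) : ℤ) = δ + 2 * (i + s + 1) by push_cast; ring]
        exact (hrel _).1
    obtain ⟨s, hs, h1⟩ := exists_lt_four_eq_one hx (δ + 2 * i + 1)
    exact absurd (hzero s hs) (by rw [h1]; decide)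

lemma exists_isThetaImage (hx : x ∈ substShift theta) :
    ∃ (δ : ℤ) (c : ℤ → Fin 2), c ∈ substShift theta ∧ IsThetaImage x δ c := by
  obtain ⟨s, -, hs⟩ := exists_lt_four_eq_one hx 0
  have hrel : IsThetaImage x (s + 1) fun j => x (s + 1 + 2 * j + 1) + 1 := by
    refine fun j => ⟨by_contra fun h => ?_, (by decide : ∀ b : Fin 2, b = b + 1 + 1) _⟩
    obtain ⟨r, hr⟩ := even_sub_of_eq_one hx hs (Fin.eq_one_of_ne_zero _ h)
    omega
  exact ⟨_, _, hrel.mem_substShift hx, hrel⟩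

lemma IsThetaImage.seqWord_eq_flatMap {δ : ℤ} {c : ℤ → Fin 2} (hrel : IsThetaImage x δ c)
    (i : ℤ) (L : ℕ) : seqWord x (δ + 2 * i) (2 * L) = (seqWord c i L).flatMap theta := by
  induction L with
  | zero => simp [seqWord]
  | succ L ih =>
    have hL := hrel (i + L)
    rw [mul_add, mul_one, seqWord_add, ih, seqWord_add, seqWord_one, List.flatMap_append,
      List.flatMap_singleton, theta_eq, seqWord_two]
    push_cast
    rw [show δ + 2 * i + 2 * L = δ + 2 * (i + L) by ring, hL.1, hL.2]

lemma exists_blocks_substPow (hx : x ∈ substShift theta) (ρ : ℕ) :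
    ∃ (g : ℤ) (c : ℤ → Fin 2), c ∈ substShift theta ∧
      ∀ j, seqWord x (g + 2 ^ ρ * j) (2 ^ ρ) = substPow theta ρ (c j) := by
  induction ρ generalizing x with
  | zero => exact ⟨0, x, hx, fun j => by simp [seqWord_one, substPow]⟩
  | succ ρ ih =>
    obtain ⟨δ, c₁, hc₁, hrel⟩ := exists_isThetaImage hx
    obtain ⟨g, c, hc, hB⟩ := ih hc₁
    refine ⟨δ + 2 * g, c, hc, fun j => ?_⟩
    rw [show δ + 2 * g + 2 ^ (ρ + 1) * j = δ + 2 * (g + 2 ^ ρ * j) by ring,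
      show 2 ^ (ρ + 1) = 2 * 2 ^ ρ by ring, hrel.seqWord_eq_flatMap, hB, substPow_succ']

/-! ### Parity of the number of `a`'s along progressions of windows -/

lemma IsThetaImage.count_one_seqWord_two {δ : ℤ} {c : ℤ → Fin 2} (hrel : IsThetaImage x δ c)
    (s : ℤ) : (seqWord x s 2).count 1 = [c ((s - δ) / 2)].count 0 := by
  rw [seqWord_two]
  obtain ⟨i, rfl | rfl⟩ : ∃ i, s = δ + 2 * i ∨ s = δ + 2 * i + 1 := ⟨(s - δ) / 2, by omega⟩
  · rw [show (δ + 2 * i - δ) / 2 = i by omega, (hrel i).1, (hrel i).2]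
    generalize c i = b; revert b; decide
  · rw [show (δ + 2 * i + 1 - δ) / 2 = i by omega, (hrel i).2,
      show δ + 2 * i + 1 + 1 = δ + 2 * (i + 1) by ring, (hrel _).1]
    generalize c i = b; revert b; decide

lemma IsThetaImage.count_one_seqWord_two_mul {δ : ℤ} {c : ℤ → Fin 2} (hrel : IsThetaImage x δ c)
    (s : ℤ) (L : ℕ) : (seqWord x s (2 * L)).count 1 = (seqWord c ((s - δ) / 2) L).count 0 := by
  induction L with
  | zero => simp [seqWord]
  | succ L ih =>
    rw [mul_add, mul_one, seqWord_add, List.count_append, ih, seqWord_add, List.count_append,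
      seqWord_one, hrel.count_one_seqWord_two]
    push_cast
    rw [show s + 2 * L - δ = s - δ + L * 2 by ring, Int.add_mul_ediv_right _ _ two_ne_zero]

lemma IsThetaImage.even_count_of_forall_even_count {δ : ℤ} {c : ℤ → Fin 2}
    (hrel : IsThetaImage x δ c) {Δ : ℕ} {M : ℤ}
    (h : ∀ k : ℕ, Even ((seqWord x (M + k * (2 * Δ : ℕ)) (2 * Δ)).count 0)) (k : ℕ) :
    Even ((seqWord c ((M - δ) / 2 + k * Δ) Δ).count 0) := by
  have hsum := count_zero_add_count_one (seqWord x (M + k * (2 * Δ : ℕ)) (2 * Δ))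
  rw [length_seqWord, hrel.count_one_seqWord_two_mul, show M + k * (2 * Δ : ℕ) - δ =
    M - δ + k * Δ * 2 by push_cast; ring, Int.add_mul_ediv_right _ _ two_ne_zero] at hsum
  have hk := h k
  rw [Nat.even_iff] at hk ⊢
  omega

lemma exists_add_mul_eq_zero (hx : x ∈ substShift theta) {Δ : ℕ} (hΔ : Odd Δ) (s : ℤ) :
    ∃ k : ℕ, x (s + k * Δ) = 0 := by
  obtain ⟨δ, c, -, hrel⟩ := exists_isThetaImage hx
  obtain ⟨d, hd⟩ := hΔ
  rcases Int.even_or_odd (s - δ) with ⟨i, hi⟩ | ⟨i, hi⟩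
  · refine ⟨0, ?_⟩
    rw [show s + ((0 : ℕ) : ℤ) * Δ = δ + 2 * i by push_cast; omega]
    exact (hrel i).1
  · refine ⟨1, ?_⟩
    rw [show s + ((1 : ℕ) : ℤ) * Δ = δ + 2 * (i + d + 1) by push_cast [hd]; omega]
    exact (hrel _).1

lemma exists_add_mul_eq_one (hx : x ∈ substShift theta) {Δ : ℕ} (hΔ : Odd Δ) (s : ℤ) :
    ∃ k : ℕ, x (s + k * Δ) = 1 := by
  by_contra! hne
  obtain ⟨δ, c, hc, hrel⟩ := exists_isThetaImage hx
  obtain ⟨d, hd⟩ := hΔ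
  obtain ⟨k₁, i₁, hk₁⟩ : ∃ (k₁ : ℕ) (i₁ : ℤ), s + k₁ * Δ = δ + 2 * i₁ + 1 := by
    rcases Int.even_or_odd (s - δ) with ⟨i, hi⟩ | ⟨i, hi⟩
    · exact ⟨1, i + d, by push_cast [hd]; omega⟩
    · exact ⟨0, i, by push_cast; omega⟩
  obtain ⟨k, hk⟩ := exists_add_mul_eq_zero hc (Δ := Δ) ⟨d, hd⟩ i₁
  have := hne (k₁ + 2 * k)
  rw [show s + ((k₁ + 2 * k : ℕ) : ℤ) * Δ = δ + 2 * (i₁ + k * Δ) + 1 by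
    push_cast; linear_combination hk₁, (hrel _).2, hk] at this
  exact this rfl

lemma exists_add_mul_eq_add_two_pow_mul {Δ : ℕ} (hΔ : Odd Δ) (ρ : ℕ) (M a : ℤ) :
    ∃ (k : ℕ) (i : ℤ), M + k * Δ = a + 2 ^ ρ * i := by
  have hcop : IsCoprime (Δ : ℤ) ((2 ^ ρ : ℕ) : ℤ) :=
    Nat.isCoprime_iff_coprime.2 (Nat.Coprime.pow_right ρ (Nat.coprime_two_right.2 hΔ))
  obtain ⟨u, v, huv⟩ := hcop
  push_cast at huv
  have hpos : (0 : ℤ) < 2 ^ ρ := by positivity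
  refine ⟨(u * (a - M) % 2 ^ ρ).toNat, -(v * (a - M)) - u * (a - M) / 2 ^ ρ * Δ, ?_⟩
  rw [Int.toNat_of_nonneg (Int.emod_nonneg _ hpos.ne'), Int.emod_def]
  linear_combination (a - M) * huv

lemma count_zero_seqWord_sub_one {ρ Δ : ℕ} (hΔ : 0 < Δ) (hΔρ : Δ ≤ 2 ^ ρ) {g : ℤ}
    {c : ℤ → Fin 2} {u : List (Fin 2)} {l : Fin 2}
    (hB : ∀ j, seqWord x (g + 2 ^ ρ * j) (2 ^ ρ) = u ++ [c j + l]) (i : ℤ) :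
    (seqWord x (g - 1 + 2 ^ ρ * i) Δ).count 0 =
      [c (i - 1) + l].count 0 + (u.take (Δ - 1)).count 0 := by
  have hu : u.length + 1 = 2 ^ ρ := by
    simpa [length_seqWord] using (congrArg List.length (hB 0)).symm
  obtain ⟨n, rfl⟩ : ∃ n, Δ = 1 + n := ⟨Δ - 1, by omega⟩
  rw [seqWord_add, seqWord_one, List.count_append, Nat.add_sub_cancel_left]
  congr 2
  · have h := List.getElem_of_eq (hB (i - 1)) (i := u.length) (by rw [length_seqWord]; omega)
    rw [getElem_seqWord, List.getElem_concat_length rfl] at h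
    have : (u.length : ℤ) + 1 = 2 ^ ρ := by exact_mod_cast hu
    rw [← h, show g - 1 + 2 ^ ρ * i = g + 2 ^ ρ * (i - 1) + u.length by linear_combination -this]
  · rw [← take_seqWord _ _ (show n ≤ 2 ^ ρ by omega),
      show g - 1 + 2 ^ ρ * i + ((1 : ℕ) : ℤ) = g + 2 ^ ρ * i by push_cast; ring, hB,
      List.take_append_of_le_length (by omega)]

lemma not_forall_even_count_of_odd (hx : x ∈ substShift theta) {Δ : ℕ} (hΔ : Odd Δ) (M : ℤ) :
    ¬ ∀ k : ℕ, Even ((seqWord x (M + k * Δ) Δ).count 0) := by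
  intro hall
  obtain ⟨g, c, hc, hB⟩ := exists_blocks_substPow hx Δ
  obtain ⟨u, l, hu⟩ := exists_substPow_theta_eq_append Δ
  obtain ⟨k₀, i₀, hk₀⟩ := exists_add_mul_eq_add_two_pow_mul hΔ Δ M (g - 1)
  have heven : ∀ k : ℕ, Even ([c (i₀ - 1 + k * Δ) + l].count 0 + (u.take (Δ - 1)).count 0) := by
    intro k
    have := hall (k₀ + 2 ^ Δ * k)
    rwa [show M + ((k₀ + 2 ^ Δ * k : ℕ) : ℤ) * Δ = g - 1 + 2 ^ Δ * (i₀ + k * Δ) by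
        push_cast; linear_combination hk₀,
      count_zero_seqWord_sub_one hΔ.pos Nat.lt_two_pow_self.le fun j => (hB j).trans (hu (c j)),
      ← sub_add_eq_add_sub] at this
  obtain ⟨k₁, h₁⟩ := exists_add_mul_eq_zero hc hΔ (i₀ - 1)
  obtain ⟨k₂, h₂⟩ := exists_add_mul_eq_one hc hΔ (i₀ - 1)
  have e₁ := heven k₁
  have e₂ := heven k₂
  rw [h₁] at e₁
  rw [h₂] at e₂
  have hl := (by decide : ∀ l : Fin 2, [0 + l].count 0 + [1 + l].count 0 = 1) l
  rw [Nat.even_iff] at e₁ e₂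
  omega

lemma not_forall_even_count (hx : x ∈ substShift theta) {Δ : ℕ} (hΔ : 0 < Δ) (M : ℤ) :
    ¬ ∀ k : ℕ, Even ((seqWord x (M + k * Δ) Δ).count 0) := by
  induction Δ using Nat.strong_induction_on generalizing x M with
  | _ Δ ih =>
    rcases Nat.even_or_odd' Δ with ⟨Δ', rfl | rfl⟩
    · obtain ⟨δ, c, hc, hrel⟩ := exists_isThetaImage hx
      exact fun hall => ih Δ' (by omega) hc (by omega) _ (hrel.even_count_of_forall_even_count hall)
    · exact not_forall_even_count_of_odd hx (odd_two_mul_add_one Δ') M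

end ThetaSubshift

/-! ### The orbit of `S` through the `θ³`-blocks -/

def speedupStep (x : ℤ → Fin 2) (t : ℤ) : ℤ := t + jump (shiftZ t x)

lemma Sspeed_iterate (x : ℤ → Fin 2) (n : ℕ) :
    Sspeed^[n] x = shiftZ ((speedupStep x)^[n] 0) x := by
  have hsemi : Semiconj (shiftZ · x) (speedupStep x) Sspeed := fun t => by
    rw [Sspeed, shiftMap_iterate, shiftZ_shiftZ, speedupStep, add_comm]
  simpa using ((hsemi.iterate_right n).eq 0).symm

lemma jump_shiftZ {x : ℤ → Fin 2} (hx : x ∈ substShift theta) (t : ℤ) :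
    jump (shiftZ t x) = if seqWord x t 8 = substPow theta 3 0 then 3
      else if seqWord x (t - 1) 8 = substPow theta 3 0 then 1 else 2 := by
  have hA : ∀ s, shiftZ s x ∈ Aset ↔ seqWord x s 8 = substPow theta 3 0 := fun s => by
    simp only [Aset, Set.mem_ofPred_eq, shiftZ_mem_substShift hx, seqWord_shiftZ, zero_add,
      true_and]
    rfl
  simp only [jump, shiftZ_mem_image_shiftMap_iff, hA]

-- `jump` at offset `r` of a `θ³`-block with letter `a`.
def blockJump (a : Fin 2) (r : ℕ) : ℕ :=
  if r = 0 ∧ a = 0 then 3 else if r = 1 ∧ a = 0 then 1 else 2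

def blockStep (a : Fin 2) (r : ℕ) : ℕ := r + blockJump a r

lemma blockStep_iterate_four : ∀ a : Fin 2, ∀ e < 2, (∀ m < 4, (blockStep a)^[m] e < 8) ∧
    (blockStep a)^[4] e = 8 + (e + [a].count 0) % 2 := by decide

lemma exists_blockStep_iterate_cross : ∀ a : Fin 2, ∀ r < 8, ∃ d, d < 5 ∧
    (∀ m < d, (blockStep a)^[m] r < 8) ∧ 8 ≤ (blockStep a)^[d] r ∧ (blockStep a)^[d] r < 10 := by
  decide

section Blocks

variable {x : ℤ → Fin 2} {g : ℤ} {c : ℤ → Fin 2}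
  (hB : ∀ j, seqWord x (g + 8 * j) 8 = substPow theta 3 (c j))
include hB

lemma seqWord_block_add (j : ℤ) {r : ℕ} (hr : r ≤ 8) : seqWord x (g + 8 * j + r) 8 =
    ((substPow theta 3 (c j) ++ substPow theta 3 (c (j + 1))).drop r).take 8 := by
  rw [← hB, ← hB, show g + 8 * (j + 1) = g + 8 * j + ((8 : ℕ) : ℤ) by push_cast; ring,
    ← seqWord_add, drop_seqWord _ _ (by omega), take_seqWord _ _ (by omega)]

lemma seqWord_eq_substPow_three_zero_iff (t : ℤ) :
    seqWord x t 8 = substPow theta 3 0 ↔ ∃ j, t = g + 8 * j ∧ c j = 0 := by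
  obtain ⟨j, r, hr, rfl⟩ : ∃ (j : ℤ) (r : ℕ), r < 8 ∧ t = g + 8 * j + r :=
    ⟨(t - g) / 8, ((t - g) % 8).toNat, by omega, by omega⟩
  rw [seqWord_block_add hB j hr.le]
  refine (take_drop_substPow_theta_three_eq_iff r hr _ _).trans ⟨?_, ?_⟩
  · rintro ⟨hr0, h⟩
    exact ⟨j, by simp [show r = 0 from hr0], h⟩
  · rintro ⟨j', hj', h⟩
    obtain ⟨rfl, rfl⟩ : r = 0 ∧ j' = j := by omega
    exact ⟨rfl, h⟩

lemma jump_shiftZ_block (hx : x ∈ substShift theta) (j : ℤ) {r : ℕ} (hr : r < 8) :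
    jump (shiftZ (g + 8 * j + r) x) = blockJump (c j) r := by
  have key : ∀ s : ℤ, -1 ≤ s → s < 8 →
      ((∃ j', g + 8 * j + s = g + 8 * j' ∧ c j' = 0) ↔ s = 0 ∧ c j = 0) := by
    refine fun s h₁ h₂ => ⟨fun ⟨j', hj', h⟩ => ?_, fun ⟨hs, h⟩ => ⟨j, by rw [hs, add_zero], h⟩⟩
    obtain ⟨rfl, rfl⟩ : s = 0 ∧ j' = j := by omega
    exact ⟨rfl, h⟩
  have h₀ := key (r : ℤ) (by omega) (by omega)
  have h₁ := key ((r : ℤ) - 1) (by omega) (by omega)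
  simp only [jump_shiftZ hx, seqWord_eq_substPow_three_zero_iff hB, add_sub_assoc, h₀, h₁]
  simp [blockJump, sub_eq_zero]

lemma speedupStep_iterate_block (hx : x ∈ substShift theta) (j : ℤ) {r n : ℕ}
    (h : ∀ m < n, (blockStep (c j))^[m] r < 8) :
    (speedupStep x)^[n] (g + 8 * j + r) = g + 8 * j + (blockStep (c j))^[n] r := by
  induction n with
  | zero => rfl
  | succ n ih =>
    rw [iterate_succ_apply', iterate_succ_apply', ih fun m hm => h m (by omega), speedupStep,
      jump_shiftZ_block hB hx j (h n (by omega)), blockStep]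
    push_cast
    ring

lemma speedupStep_iterate_four (hx : x ∈ substShift theta) (j : ℤ) {e : ℕ} (he : e < 2) :
    (speedupStep x)^[4] (g + 8 * j + e) = g + 8 * (j + 1) + ((e + [c j].count 0) % 2 : ℕ) := by
  obtain ⟨hlt, heq⟩ := blockStep_iterate_four (c j) e he
  rw [speedupStep_iterate_block hB hx j hlt, heq]
  push_cast
  ring

lemma speedupStep_iterate_four_mul (hx : x ∈ substShift theta) (j : ℤ) {e : ℕ} (he : e < 2)
    (i : ℕ) : (speedupStep x)^[4 * i] (g + 8 * j + e) =
      g + 8 * (j + i) + ((e + (seqWord c j i).count 0) % 2 : ℕ) := by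
  induction i with
  | zero => simp [seqWord, Nat.mod_eq_of_lt he]
  | succ i ih =>
    rw [mul_add, mul_one, add_comm, iterate_add_apply, ih,
      speedupStep_iterate_four hB hx _ (Nat.mod_lt _ two_pos), seqWord_add, seqWord_one,
      List.count_append, ← add_assoc, Nat.mod_add_mod]
    push_cast
    ring

lemma exists_speedupStep_iterate_cross (hx : x ∈ substShift theta) (a : Fin 2) {r : ℕ}
    (hr : r < 8) : ∃ d e : ℕ, e < 2 ∧
      ∀ j, c j = a → (speedupStep x)^[d] (g + 8 * j + r) = g + 8 * (j + 1) + e := by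
  obtain ⟨d, -, hlt, h₁, h₂⟩ := exists_blockStep_iterate_cross a r hr
  refine ⟨d, (blockStep a)^[d] r - 8, by omega, fun j hj => ?_⟩
  rw [speedupStep_iterate_block hB hx j (hj ▸ hlt), hj]
  omega

lemma exists_block_shift_of_agree (hc : c ∈ substShift theta) {J₀ : ℤ} {r₀ : ℕ} (hr₀ : r₀ < 8)
    (h₀ : g + 8 * J₀ + r₀ = 0) {t : ℤ} (ht : ∀ i : ℤ, |i| ≤ 16 → x (i + t) = x i) :
    ∃ m : ℤ, t = 8 * m ∧ c (J₀ + m) = c J₀ := by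
  have hwin : ∀ s : ℤ, -8 ≤ s → s ≤ 8 → seqWord x (s + t) 8 = seqWord x s 8 := fun s h₁ h₂ =>
    seqWord_congr fun m hm => by rw [add_right_comm]; exact ht _ (by rw [abs_le]; omega)
  obtain ⟨j, hj, hcj⟩ : ∃ j, (j = J₀ ∨ j = J₀ + 1) ∧ c j = 0 := by
    by_contra! h
    obtain ⟨k, hk⟩ := even_sub_of_eq_one hc (Fin.eq_one_of_ne_zero _ (h J₀ (Or.inl rfl)))
      (Fin.eq_one_of_ne_zero _ (h (J₀ + 1) (Or.inr rfl)))
    omega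
  obtain ⟨j', hj', -⟩ := (seqWord_eq_substPow_three_zero_iff hB _).1
    ((hwin (g + 8 * j) (by omega) (by omega)).trans ((hB j).trans (by rw [hcj])))
  refine ⟨j' - j, by omega, substPow_theta_three_injective ?_⟩
  rw [← hB, ← hB, show g + 8 * (J₀ + (j' - j)) = g + 8 * J₀ + t by omega,
    hwin _ (by omega) (by omega)]

lemma exists_forall_even_count (hx : x ∈ substShift theta) (hc : c ∈ substShift theta) {p : ℕ}
    (hrec : ∀ k : ℕ, ∀ i : ℤ, |i| ≤ 16 → x (i + (speedupStep x)^[k * (4 * p)] 0) = x i) :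
    ∃ M : ℤ, ∀ k : ℕ, Even ((seqWord c M (k * p)).count 0) := by
  obtain ⟨J₀, r₀, hr₀, h₀⟩ : ∃ (J₀ : ℤ) (r₀ : ℕ), r₀ < 8 ∧ g + 8 * J₀ + r₀ = 0 :=
    ⟨(-g) / 8, ((-g) % 8).toNat, by omega, by omega⟩
  obtain ⟨d, e, he, hcross⟩ := exists_speedupStep_iterate_cross hB hx (c J₀) hr₀
  refine ⟨J₀ + 1, fun k => ?_⟩
  obtain ⟨m, hm, hcm⟩ := exists_block_shift_of_agree hB hc hr₀ h₀ (hrec k)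
  -- the position after `d + 4 k p` steps, computed from the return time and from the start
  have h₁ : (speedupStep x)^[d + k * (4 * p)] 0 = g + 8 * (J₀ + m + 1) + e := by
    rw [iterate_add_apply, show (speedupStep x)^[k * (4 * p)] 0 = g + 8 * (J₀ + m) + r₀ by omega,
      hcross _ hcm]
  have h₂ : (speedupStep x)^[d + k * (4 * p)] 0 =
      g + 8 * (J₀ + 1 + (k * p : ℕ)) + ((e + (seqWord c (J₀ + 1) (k * p)).count 0) % 2 : ℕ) := by
    rw [add_comm, iterate_add_apply, show (speedupStep x)^[d] 0 = g + 8 * (J₀ + 1) + e by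
      simpa [h₀] using hcross J₀ rfl, show k * (4 * p) = 4 * (k * p) by ring,
      speedupStep_iterate_four_mul hB hx _ he]
  rw [Nat.even_iff]
  omega

end Blocks

lemma not_isRegularlyRecurrent_Sspeed {x : ℤ → Fin 2} (hx : x ∈ substShift theta) :
    ¬ IsRegularlyRecurrent Sspeed x := by
  intro hrec
  obtain ⟨g, c, hc, hB⟩ := exists_blocks_substPow hx 3
  obtain ⟨p, hp, hper⟩ := hrec.exists_iterate_eq_of_abs_le 16
  obtain ⟨M, hM⟩ := exists_forall_even_count (by simpa using hB) hx hc (p := p) fun k i hi => by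
    rw [← hper (4 * k) i hi, Sspeed_iterate, shiftZ_apply, show 4 * k * p = k * (4 * p) by ring]
  refine not_forall_even_count hc hp M fun k => ?_
  have h := hM (k + 1)
  rw [add_mul, one_mul, seqWord_add, List.count_append, Nat.even_add] at h
  simpa using h.1 (hM k)

/-- the speedup (X_θ, S) of Example 3.1 is not a Toeplitz flow. -/
theorem statement4 : ¬ IsToeplitzFlow (substShift theta) Sspeed := by
  rintro ⟨B, -, z, hz, hS, hR, h, hconj⟩
  let : TopologicalSpace B := ⊥
  have : DiscreteTopology B := ⟨rfl⟩
  have hzY : z ∈ orbitClosure z := subset_closure ⟨0, shiftZ_zero z⟩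
  have hsemi : Semiconj (Subtype.val ∘ h.symm) (hR.restrict _ _ _) Sspeed := fun y => by
    simpa using (congrArg (Subtype.val ∘ h.symm) (hconj (h.symm y))).symm
  exact not_isRegularlyRecurrent_Sspeed (h.symm ⟨z, hzY⟩).2
    ((hz.isRegularlyRecurrent.restrict hR hzY).of_semiconj (by fun_prop) hsemi)

end
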